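/- arXiv:0909.5674 — 2 statements merged into one kernel-verified Lean document; each statement's English description precedes it below -/
import Mathlib

section
/- Exceptional case t = γ (Theorem 3.4 / Lemma 3.18): Suppose t = γ. (i) If μ = 0 and η = 0, then for every d > 0 the constant function ψ ≡ 1 is a solution of the model Lichnerowicz equation L_d; in particular every d > 0 admits a solution with ψ(0) = 1, so there is a one-parameter family of solutions of the reduced system. (ii) If μ = 0 and η ≠ 0, then for every d > 0, every solution ψ of L_d satisfies ψ(0) > 1; in particular no d > 0 admits a solution with ψ(0) = 1. -/
open Real Filter

/-- The 2π-periodic function equal to −1 on (−π,0) and 1 on (0,π). -/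
noncomputable def lam (x : ℝ) : ℝ := if 0 < Real.sin x then 1 else -1

/-- The critical exponent q = 2n/(n−2). -/
noncomputable def qex (n : ℕ) : ℝ := 2 * n / ((n : ℝ) - 2)

/-- The coupling constant κ = (n−1)/n. -/
noncomputable def kap (n : ℕ) : ℝ := ((n : ℝ) - 1) / n

/-- A solution of the model Lichnerowicz equation `L_d` with parameters t, γ, η, μ:
a 2π-periodic, positive, C¹ function, twice differentiable off the multiples of π,
satisfying the equation there. -/
def IsModelSolution (n : ℕ) (t γ η μ d : ℝ) (ψ : ℝ → ℝ) : Prop :=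
  (∀ x, ψ (x + 2 * Real.pi) = ψ x) ∧
  (∀ x, 0 < ψ x) ∧
  ContDiff ℝ 1 ψ ∧
  ∀ x : ℝ, (∀ k : ℤ, x ≠ (k : ℝ) * Real.pi) →
    DifferentiableAt ℝ (deriv ψ) x ∧
    -2 * kap n * qex n * d ^ (-(qex n - 2)) * deriv (deriv ψ) x
      - 2 * η ^ 2 * d ^ (-(2 * qex n)) * ψ x ^ (-qex n - 1)
      - kap n * (μ * d ^ (-qex n) + γ + lam x) ^ 2 * ψ x ^ (-qex n - 1)
      + kap n * (t + lam x) ^ 2 * ψ x ^ (qex n - 1) = 0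

/-!
With `t = γ` and `μ = 0` the equation reads
`2κq d^{2-q} ψ'' = -2η² d^{-2q} ψ^{-q-1} + κ (t + λ)² (ψ^{q-1} - ψ^{-q-1})`,
so for `η = 0` the constant `1` solves it. For `η ≠ 0`, look at a global minimum `a` of the
periodic function `ψ`. If `ψ a ≤ 1`, the bracket is `≤ 0` at `a`, so by continuity the right-hand
side is negative just to the right of `a`: `ψ` is strictly concave there with `ψ' a = 0`, hence
strictly decreasing, contradicting minimality. So `ψ > 1` everywhere.
-/

open Set Topology

theorem qex_pos {n : ℕ} (hn : 2 < n) : 0 < qex n := by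
  have : (2 : ℝ) < n := by exact_mod_cast hn
  exact div_pos (by linarith) (by linarith)

theorem kap_pos {n : ℕ} (hn : 1 < n) : 0 < kap n := by
  have : (1 : ℝ) < n := by exact_mod_cast hn
  exact div_pos (by linarith) (by linarith)

theorem sq_add_lam_le (t x : ℝ) : (t + lam x) ^ 2 ≤ (|t| + 1) ^ 2 := by
  have hlam : |lam x| = 1 := by unfold lam; split_ifs <;> simp
  rw [← sq_abs, ← hlam]
  gcongr
  exact abs_add_le t (lam x)

theorem isModelSolution_const_one (n : ℕ) (t d : ℝ) :
    IsModelSolution n t t 0 0 d (fun _ => 1) := by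
  refine ⟨fun _ => rfl, fun _ => one_pos, contDiff_const, fun x _ => ?_⟩
  simp

theorem eventually_nhdsGT_ne_int_mul {p : ℝ} (hp : 0 < p) (a : ℝ) :
    ∀ᶠ x in 𝓝[>] a, ∀ k : ℤ, x ≠ k * p := by
  have ha : a < (⌊a / p⌋ + 1) * p := by
    rw [← div_lt_iff₀ hp]
    exact Int.lt_floor_add_one _
  filter_upwards [Ioo_mem_nhdsGT ha] with x ⟨hax, hxb⟩ k rfl
  have hlow : ⌊a / p⌋ < k := Int.floor_lt.2 ((div_lt_iff₀ hp).2 hax)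
  have hhigh : k < ⌊a / p⌋ + 1 := by exact_mod_cast lt_of_mul_lt_mul_right hxb hp.le
  omega

theorem Function.Periodic.exists_forall_le {f : ℝ → ℝ} {c : ℝ} (hp : Function.Periodic f c)
    (hc : c ≠ 0) (hf : Continuous f) : ∃ a, ∀ x, f a ≤ f x := by
  obtain ⟨_, ⟨a, rfl⟩, hleast⟩ :=
    (hp.compact_of_continuous hc hf).exists_isLeast (range_nonempty f)
  exact ⟨a, fun x => hleast (mem_range_self x)⟩

theorem IsLocalMin.not_eventually_deriv_deriv_neg {f : ℝ → ℝ} {a : ℝ} (hf : ContDiff ℝ 1 f)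
    (hmin : IsLocalMin f a) : ¬ ∀ᶠ x in 𝓝[>] a, deriv (deriv f) x < 0 := by
  intro hneg
  obtain ⟨c, hac : a < c, hc⟩ :=
    mem_nhdsGT_iff_exists_Ioo_subset.1 (hneg.and (nhdsWithin_le_nhds hmin))
  have hderiv_anti : StrictAntiOn (deriv f) (Icc a c) :=
    strictAntiOn_of_deriv_neg (convex_Icc a c) (hf.continuous_deriv le_rfl).continuousOn
      (by rw [interior_Icc]; exact fun x hx => (hc hx).1)
  have hderiv_neg : ∀ x ∈ Ioo a c, deriv f x < 0 := fun x hx =>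
    hmin.deriv_eq_zero ▸ hderiv_anti (left_mem_Icc.2 hac.le) (Ioo_subset_Icc_self hx) hx.1
  have hf_anti : StrictAntiOn f (Icc a c) :=
    strictAntiOn_of_deriv_neg (convex_Icc a c) hf.continuous.continuousOn
      (by rw [interior_Icc]; exact hderiv_neg)
  have hmid : (a + c) / 2 ∈ Ioo a c := ⟨by linarith, by linarith⟩
  exact (hf_anti (left_mem_Icc.2 hac.le) (Ioo_subset_Icc_self hmid) hmid.1).not_ge (hc hmid).2

theorem eventually_mul_rpow_sub_lt {q A K m : ℝ} (hq : 0 ≤ q) (hA : 0 < A) (hK : 0 ≤ K)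
    (hm : 0 < m) (hm1 : m ≤ 1) :
    ∀ᶠ u in 𝓝 m, K * (u ^ (q - 1) - u ^ (-q - 1)) < A * u ^ (-q - 1) := by
  have hcont : ∀ r : ℝ, ContinuousAt (fun u : ℝ => u ^ r) m :=
    fun r => Real.continuousAt_rpow_const m r (Or.inl hm.ne')
  refine ContinuousAt.eventually_lt (continuousAt_const.mul ((hcont _).sub (hcont _)))
    (continuousAt_const.mul (hcont _)) ?_
  have hle : m ^ (q - 1) ≤ m ^ (-q - 1) := Real.rpow_le_rpow_of_exponent_ge hm hm1 (by linarith)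
  have hpos : 0 < m ^ (-q - 1) := Real.rpow_pos_of_pos hm _
  nlinarith

theorem IsModelSolution.deriv_deriv_neg {n : ℕ} (hn : 3 ≤ n) {t η d : ℝ} {ψ : ℝ → ℝ}
    (hη : η ≠ 0) (hd : 0 < d) (hψ : IsModelSolution n t t η 0 d ψ) {x : ℝ}
    (hx : ∀ k : ℤ, x ≠ k * Real.pi)
    (hlt : kap n * (|t| + 1) ^ 2 * (ψ x ^ (qex n - 1) - ψ x ^ (-qex n - 1))
      < 2 * η ^ 2 * d ^ (-(2 * qex n)) * ψ x ^ (-qex n - 1)) :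
    deriv (deriv ψ) x < 0 := by
  have hκ := kap_pos (n := n) (by omega)
  have hscale : 0 < 2 * kap n * qex n * d ^ (-(qex n - 2)) := by
    have := qex_pos (n := n) (by omega)
    have := Real.rpow_pos_of_pos hd (-(qex n - 2))
    positivity
  have hsink : 0 < 2 * η ^ 2 * d ^ (-(2 * qex n)) * ψ x ^ (-qex n - 1) := by
    have := Real.rpow_pos_of_pos hd (-(2 * qex n))
    have := Real.rpow_pos_of_pos (hψ.2.1 x) (-qex n - 1)
    positivity
  have hcoef : kap n * (t + lam x) ^ 2 ≤ kap n * (|t| + 1) ^ 2 :=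
    mul_le_mul_of_nonneg_left (sq_add_lam_le t x) hκ.le
  have hsource : kap n * (t + lam x) ^ 2 * (ψ x ^ (qex n - 1) - ψ x ^ (-qex n - 1))
      < 2 * η ^ 2 * d ^ (-(2 * qex n)) * ψ x ^ (-qex n - 1) := by
    rcases le_or_gt 0 (ψ x ^ (qex n - 1) - ψ x ^ (-qex n - 1)) with hg | hg
    · exact (mul_le_mul_of_nonneg_right hcoef hg).trans_lt hlt
    · exact (mul_nonpos_of_nonneg_of_nonpos (by positivity) hg.le).trans_lt hsink
  have heq := (hψ.2.2.2 x hx).2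
  simp only [zero_mul, zero_add] at heq
  nlinarith

theorem IsModelSolution.one_lt {n : ℕ} (hn : 3 ≤ n) {t η d : ℝ} {ψ : ℝ → ℝ} (hη : η ≠ 0)
    (hd : 0 < d) (hψ : IsModelSolution n t t η 0 d ψ) (x : ℝ) : 1 < ψ x := by
  have ⟨hper, hpos, hC1, _⟩ := hψ
  obtain ⟨a, hmin⟩ := Function.Periodic.exists_forall_le hper (by positivity) hC1.continuous
  refine lt_of_lt_of_le ?_ (hmin x)
  by_contra! ha
  have hnear : ∀ᶠ y in 𝓝 a, kap n * (|t| + 1) ^ 2 * (ψ y ^ (qex n - 1) - ψ y ^ (-qex n - 1))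
      < 2 * η ^ 2 * d ^ (-(2 * qex n)) * ψ y ^ (-qex n - 1) :=
    hC1.continuous.continuousAt.eventually <| eventually_mul_rpow_sub_lt
      (qex_pos (by omega)).le (by have := Real.rpow_pos_of_pos hd (-(2 * qex n)); positivity)
      (by have := kap_pos (n := n) (by omega); positivity) (hpos a) ha
  have hlocal : IsLocalMin ψ a := Eventually.of_forall hmin
  refine hlocal.not_eventually_deriv_deriv_neg hC1 ?_
  filter_upwards [eventually_nhdsGT_ne_int_mul Real.pi_pos a, nhdsWithin_le_nhds hnear]
    with y hy hlt
  exact hψ.deriv_deriv_neg hn hη hd hy hlt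

theorem exceptional_case_general (n : ℕ) (hn : 3 ≤ n) (t γ η μ : ℝ)
    (ht : t = γ) (hμ : μ = 0) :
    (η = 0 → ∀ d : ℝ, 0 < d → IsModelSolution n t γ η μ d (fun _ => 1)) ∧
    (η ≠ 0 → ∀ d : ℝ, 0 < d → ∀ ψ : ℝ → ℝ, IsModelSolution n t γ η μ d ψ → 1 < ψ 0) := by
  subst ht hμ
  exact ⟨fun hη d _ => hη ▸ isModelSolution_const_one n t d,
    fun hη d hd ψ hψ => hψ.one_lt hn hη hd 0⟩

/-- Exceptional case t = γ (Theorem 3.4 / Lemma 3.18). -/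
theorem exceptional_case (n : ℕ) (hn : 3 ≤ n) (t γ η μ : ℝ)
    (hγ : -1 < γ ∧ γ < 1) (ht : t = γ) (hμ : μ = 0) :
    (η = 0 → ∀ d : ℝ, 0 < d → IsModelSolution n t γ η μ d (fun _ => 1)) ∧
    (η ≠ 0 → ∀ d : ℝ, 0 < d → ∀ ψ : ℝ → ℝ, IsModelSolution n t γ η μ d ψ → 1 < ψ 0) :=
  exceptional_case_general n hn t γ η μ ht hμ
end

section
/- Template solution on the half line (Proposition 4.2): Let u₀ > 0. There exists a function U : [0, ∞) → ℝ, positive and twice continuously differentiable, such that U(0) = u₀, −U''(x) = U(x)^{−q−1} − U(x)^{q−1} for all x ≥ 0, U satisfies the first order equation U'(x) = √(2/q) · (U(x)^{−q/2} − U(x)^{q/2}) for all x ≥ 0, and U converges to 1 rapidly at infinity with U' converging to 0 rapidly at infinity: for every real r, x^r · |U(x) − 1| → 0 and x^r · |U'(x)| → 0 as x → ∞. -/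
/-! The first-order equation `U' = f(U)` with `f(u) = √(2/q) (u^(-q/2) - u^(q/2))` is autonomous
and `1` is a stable equilibrium: `√(2/q) (u - 1)² ≤ -(u - 1) f(u)` for `u > 0`, while
`|f(u)| ≤ K |u - 1|` near `1`. For `u₀ < 1` the solution is the inverse of
`F(u) = ∫_{u₀}^u dt / f(t)`, defined for all times since the Lipschitz bound makes `F` blow up
logarithmically at `1`; the case `u₀ > 1` reduces to this through the reflection `u ↦ 2 - u`.
Grönwall's inequality for `(U - 1)²` gives exponential decay of `U - 1`, hence of `U' = f(U)`,
and differentiating `U' = f(U)` gives the second-order equation because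
`-f'(u) f(u) = u^(-q-1) - u^(q-1)`. -/

open Real Filter Set

open Topology

theorem tendsto_rpow_mul_abs_of_abs_le_mul_exp {g : ℝ → ℝ} {B κ : ℝ} (hκ : 0 < κ)
    (hg : ∀ x ∈ Ici (0 : ℝ), |g x| ≤ B * exp (-κ * x)) (r : ℝ) :
    Tendsto (fun x => x ^ r * |g x|) atTop (𝓝 0) := by
  have hlim := (tendsto_rpow_mul_exp_neg_mul_atTop_nhds_zero r κ hκ).const_mul B
  rw [mul_zero] at hlim
  refine squeeze_zero' ?_ ?_ hlim
  all_goals filter_upwards [eventually_ge_atTop 0] with x hx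
  · positivity
  · calc x ^ r * |g x| ≤ x ^ r * (B * exp (-κ * x)) := by gcongr; exact hg x hx
      _ = B * (x ^ r * exp (-κ * x)) := by ring

theorem abs_le_mul_exp_of_mul_deriv_le {y y' : ℝ → ℝ} {κ : ℝ}
    (hy : ∀ x ∈ Ici (0 : ℝ), HasDerivAt y (y' x) x)
    (hκ : ∀ x ∈ Ici (0 : ℝ), y x * y' x ≤ -κ * y x ^ 2) {x : ℝ} (hx : 0 ≤ x) :
    |y x| ≤ |y 0| * exp (-κ * x) := by
  have hsq : ∀ t ∈ Ici (0 : ℝ), HasDerivAt (fun t => y t ^ 2) (2 * y t * y' t) t := fun t ht => by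
    simpa using (hy t ht).fun_pow 2
  have hgronwall := le_gronwallBound_of_liminf_deriv_right_le (ε := 0) (K := -2 * κ) (b := x)
    (fun t ht => (hsq t ht.1).continuousAt.continuousWithinAt)
    (fun t ht _ hr => (hsq t ht.1).hasDerivWithinAt.liminf_right_slope_le hr) le_rfl
    (fun t ht => by linarith [hκ t ht.1]) x ⟨hx, le_rfl⟩
  have hexp : rexp (-2 * κ * x) = rexp (-κ * x) ^ 2 := by rw [← exp_nat_mul]; ring_nf
  rw [gronwallBound_ε0, sub_zero, hexp, ← mul_pow] at hgronwall
  simpa only [abs_mul, abs_exp] using sq_le_sq.1 hgronwall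

theorem exists_abs_le_mul_abs_sub_of_contDiffOn {f : ℝ → ℝ} {a b z : ℝ}
    (hf : ContDiffOn ℝ 1 f (Icc a b)) (hz : z ∈ Icc a b) (hfz : f z = 0) :
    ∃ K : NNReal, ∀ u ∈ Icc a b, |f u| ≤ K * |u - z| := by
  obtain ⟨K, hK⟩ := hf.exists_lipschitzOnWith one_ne_zero (convex_Icc a b) isCompact_Icc
  exact ⟨K, fun u hu => by simpa [hfz, dist_eq] using hK.dist_le_mul u hu z hz⟩

theorem contDiffOn_succ_of_hasDerivWithinAt_comp {U f : ℝ → ℝ} {s t : Set ℝ}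
    (hs : UniqueDiffOn ℝ s) (hUst : MapsTo U s t) (hU : ∀ x ∈ s, HasDerivWithinAt U (f (U x)) s x)
    {n : ℕ} (hf : ContDiffOn ℝ n f t) : ContDiffOn ℝ (n + 1) U s := by
  have hdiff : DifferentiableOn ℝ U s := fun x hx => (hU x hx).differentiableWithinAt
  have hderiv : EqOn (derivWithin U s) (f ∘ U) s := fun x hx => (hU x hx).derivWithin (hs x hx)
  induction n with
  | zero =>
    rw [contDiffOn_succ_iff_derivWithin hs]
    exact ⟨hdiff, by simp,
      contDiffOn_zero.2 ((hf.continuousOn.comp hdiff.continuousOn hUst).congr hderiv)⟩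
  | succ m ih =>
    rw [contDiffOn_succ_iff_derivWithin hs]
    refine ⟨hdiff, by simp, (hf.comp ?_ hUst).congr hderiv⟩
    exact_mod_cast ih hf.of_succ

theorem derivWithin_derivWithin_of_hasDerivWithinAt_comp {U f : ℝ → ℝ} {s : Set ℝ}
    (hs : UniqueDiffOn ℝ s) (hU : ∀ x ∈ s, HasDerivWithinAt U (f (U x)) s x) {x : ℝ} (hx : x ∈ s)
    (hf : DifferentiableAt ℝ f (U x)) :
    derivWithin (derivWithin U s) s x = deriv f (U x) * f (U x) := by
  have hderiv : EqOn (derivWithin U s) (f ∘ U) s := fun y hy => (hU y hy).derivWithin (hs y hy)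
  rw [derivWithin_congr hderiv (hderiv hx)]
  exact (hf.hasDerivAt.comp_hasDerivWithinAt x (hU x hx)).derivWithin (hs x hx)

theorem exists_hasDerivAt_inverse_of_tendsto_atTop {F F' : ℝ → ℝ} {a b c : ℝ}
    (hc : c ∈ Ioo a b) (hF : ∀ u ∈ Ioo a b, HasDerivAt F (F' u) u)
    (hF' : ∀ u ∈ Ioo a b, F' u ≠ 0) (hmono : StrictMonoOn F (Ioo a b))
    (hFb : Tendsto F (𝓝[<] b) atTop) :
    ∃ G : ℝ → ℝ, ∀ y ∈ Ioi (F c), G y ∈ Ioo c b ∧ F (G y) = y ∧ HasDerivAt G (F' (G y))⁻¹ y := by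
  have hsub : Ioo c b ⊆ Ioo a b := Ioo_subset_Ioo_left hc.1.le
  have hsurj : ∀ y ∈ Ioi (F c), ∃ u ∈ Ioo c b, F u = y := by
    intro y hy
    obtain ⟨d, hyd, hd⟩ := ((hFb.eventually_gt_atTop y).and (Ioo_mem_nhdsLT hc.2)).exists
    have hcont : ContinuousOn F (Icc c d) := fun u hu =>
      (hF u (Icc_subset_Ioo hc.1 hd.2 hu)).continuousAt.continuousWithinAt
    obtain ⟨u, hu, hFu⟩ := intermediate_value_Ioo hd.1.le hcont ⟨hy, hyd⟩
    exact ⟨u, ⟨hu.1, hu.2.trans hd.2⟩, hFu⟩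
  set G := Function.invFunOn F (Ioo c b)
  have hG : ∀ y ∈ Ioi (F c), G y ∈ Ioo c b ∧ F (G y) = y := fun y hy =>
    ⟨Function.invFunOn_mem (hsurj y hy), Function.invFunOn_eq (hsurj y hy)⟩
  have hGmono : MonotoneOn G (Ioi (F c)) := by
    intro y hy z hz hyz
    rwa [← hmono.le_iff_le (hsub (hG y hy).1) (hsub (hG z hz).1), (hG y hy).2, (hG z hz).2]
  have hGimage : G '' Ioi (F c) = Ioo c b := by
    refine MapsTo.image_subset (fun y hy => (hG y hy).1) |>.antisymm fun u hu => ?_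
    have hFu := hG _ (hmono hc (hsub hu) hu.1)
    exact ⟨F u, hmono hc (hsub hu) hu.1, hmono.injOn (hsub hFu.1) (hsub hu) hFu.2⟩
  refine ⟨G, fun y hy => ⟨(hG y hy).1, (hG y hy).2, ?_⟩⟩
  have hGcont : ContinuousAt G y := by
    refine continuousAt_of_monotoneOn_of_image_mem_nhds hGmono (isOpen_Ioi.mem_nhds hy) ?_
    rw [hGimage]
    exact isOpen_Ioo.mem_nhds (hG y hy).1
  refine HasDerivAt.of_local_left_inverse hGcont (hF _ (hsub (hG y hy).1))
    (hF' _ (hsub (hG y hy).1)) ?_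
  filter_upwards [isOpen_Ioi.mem_nhds hy] with z hz using (hG z hz).2

theorem tendsto_integral_inv_nhdsLT_one {f : ℝ → ℝ} {u₀ K : ℝ} (hu₀ : u₀ < 1)
    (hf : ContinuousOn f (Ico u₀ 1)) (hpos : ∀ u ∈ Ico u₀ 1, 0 < f u)
    (hle : ∀ u ∈ Ico u₀ 1, f u ≤ K * (1 - u)) :
    Tendsto (fun u => ∫ t in u₀..u, (f t)⁻¹) (𝓝[<] 1) atTop := by
  have hu₀mem : u₀ ∈ Ico u₀ 1 := ⟨le_rfl, hu₀⟩
  have hK : 0 < K := pos_of_mul_pos_left ((hpos u₀ hu₀mem).trans_le (hle u₀ hu₀mem)) (by linarith)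
  have hone_sub : Tendsto (fun u : ℝ => 1 - u) (𝓝[<] 1) (𝓝[>] 0) := by
    refine tendsto_nhdsWithin_iff.2
      ⟨?_, eventually_nhdsWithin_of_forall fun _ hu => mem_Ioi.2 (sub_pos.2 hu)⟩
    exact ((continuous_const.sub continuous_id).tendsto' 1 0 (sub_self 1)).mono_left
      nhdsWithin_le_nhds
  have hlog : Tendsto (fun u => K⁻¹ * (log (1 - u₀) + -log (1 - u))) (𝓝[<] 1) atTop :=
    (tendsto_atTop_add_const_left _ _ (tendsto_neg_atBot_atTop.comp
      (tendsto_log_nhdsGT_zero.comp hone_sub))).const_mul_atTop (inv_pos.2 hK)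
  refine tendsto_atTop_mono' _ ?_ hlog
  filter_upwards [Ioo_mem_nhdsLT hu₀] with u hu
  have hIcc : Icc u₀ u ⊆ Ico u₀ 1 := Icc_subset_Ico_right hu.2
  have hfu : ContinuousOn (fun t => (f t)⁻¹) (uIcc u₀ u) := by
    rw [uIcc_of_le hu.1.le]
    exact (hf.mono hIcc).inv₀ fun t ht => (hpos t (hIcc ht)).ne'
  have hKu : ContinuousOn (fun t => (K * (1 - t))⁻¹) (uIcc u₀ u) := by
    rw [uIcc_of_le hu.1.le]
    exact (continuousOn_const.mul (continuousOn_const.sub continuousOn_id)).inv₀ fun t ht =>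
      (mul_pos hK (sub_pos.2 (ht.2.trans_lt hu.2))).ne'
  calc K⁻¹ * (log (1 - u₀) + -log (1 - u)) = ∫ t in u₀..u, (K * (1 - t))⁻¹ := by
        simp only [← sub_eq_add_neg, mul_inv, intervalIntegral.integral_const_mul]
        rw [intervalIntegral.integral_comp_sub_left (fun t => t⁻¹),
          integral_inv_of_pos (by linarith [hu.2]) (by linarith),
          log_div (by linarith) (by linarith [hu.2])]
    _ ≤ ∫ t in u₀..u, (f t)⁻¹ :=
        intervalIntegral.integral_mono_on hu.1.le hKu.intervalIntegrable hfu.intervalIntegrable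
          fun t ht => inv_anti₀ (hpos t (hIcc ht)) (hle t (hIcc ht))

theorem exists_hasDerivAt_of_lt_one {f : ℝ → ℝ} {a u₀ K : ℝ} (ha : a < u₀) (hu₀ : u₀ < 1)
    (hf : ContinuousOn f (Ioo a 1)) (hpos : ∀ u ∈ Ioo a 1, 0 < f u)
    (hle : ∀ u ∈ Ioo a 1, f u ≤ K * (1 - u)) :
    ∃ U : ℝ → ℝ, U 0 = u₀ ∧ ∀ x ∈ Ici (0 : ℝ), U x ∈ Ico u₀ 1 ∧ HasDerivAt U (f (U x)) x := by
  set F := fun u => ∫ t in u₀..u, (f t)⁻¹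
  have hu₀mem : u₀ ∈ Ioo a 1 := ⟨ha, hu₀⟩
  have hinv : ContinuousOn (fun u => (f u)⁻¹) (Ioo a 1) := hf.inv₀ fun u hu => (hpos u hu).ne'
  have hF : ∀ u ∈ Ioo a 1, HasDerivAt F (f u)⁻¹ u := fun u hu =>
    intervalIntegral.integral_hasDerivAt_right
      (hinv.mono (ordConnected_Ioo.uIcc_subset hu₀mem hu)).intervalIntegrable
      (hinv.stronglyMeasurableAtFilter isOpen_Ioo u hu) (hinv.continuousAt (isOpen_Ioo.mem_nhds hu))
  have hmono : StrictMonoOn F (Ioo a 1) := by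
    refine strictMonoOn_of_hasDerivWithinAt_pos (f' := fun u => (f u)⁻¹) (convex_Ioo a 1)
      (fun u hu => (hF u hu).continuousAt.continuousWithinAt) (fun u hu => ?_) fun u hu => ?_
    all_goals rw [interior_Ioo] at hu
    exacts [(hF u hu).hasDerivWithinAt, inv_pos.2 (hpos u hu)]
  have hIco : Ico u₀ 1 ⊆ Ioo a 1 := Ico_subset_Ioo_left ha
  have hFtop := tendsto_integral_inv_nhdsLT_one hu₀ (hf.mono hIco) (fun u hu => hpos u (hIco hu))
    fun u hu => hle u (hIco hu)
  -- starting the inverse below `u₀` puts time `0` in the interior of its domain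
  have hc : (a + u₀) / 2 ∈ Ioo a 1 := ⟨by linarith, by linarith⟩
  have hF₀ : F u₀ = 0 := intervalIntegral.integral_same
  have hFc : F ((a + u₀) / 2) < 0 := hF₀ ▸ hmono hc hu₀mem (by linarith)
  obtain ⟨U, hU⟩ := exists_hasDerivAt_inverse_of_tendsto_atTop hc hF
    (fun u hu => inv_ne_zero (hpos u hu).ne') hmono hFtop
  have hUmem : ∀ x ∈ Ici (0 : ℝ), U x ∈ Ioo a 1 ∧ F (U x) = x := fun x hx =>
    ⟨Ioo_subset_Ioo_left hc.1.le (hU x (hFc.trans_le hx)).1, (hU x (hFc.trans_le hx)).2.1⟩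
  refine ⟨U, hmono.injOn (hUmem 0 self_mem_Ici).1 hu₀mem ((hUmem 0 self_mem_Ici).2.trans hF₀.symm),
    fun x hx => ⟨⟨?_, (hUmem x hx).1.2⟩, ?_⟩⟩
  · rw [← hmono.le_iff_le hu₀mem (hUmem x hx).1, hF₀, (hUmem x hx).2]
    exact hx
  · simpa only [inv_inv] using (hU x (hFc.trans_le hx)).2.2

theorem exists_hasDerivAt_of_one_lt {f : ℝ → ℝ} {b u₀ K : ℝ} (hu₀ : 1 < u₀) (hb : u₀ < b)
    (hf : ContinuousOn f (Ioo 1 b)) (hneg : ∀ u ∈ Ioo 1 b, f u < 0)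
    (hle : ∀ u ∈ Ioo 1 b, -f u ≤ K * (u - 1)) :
    ∃ U : ℝ → ℝ, U 0 = u₀ ∧ ∀ x ∈ Ici (0 : ℝ), U x ∈ Ioc 1 u₀ ∧ HasDerivAt U (f (U x)) x := by
  have hreflect : MapsTo (fun v => 2 - v) (Ioo (2 - b) 1) (Ioo 1 b) := fun v hv =>
    ⟨by linarith [hv.2], by linarith [hv.1]⟩
  obtain ⟨V, hV0, hV⟩ := exists_hasDerivAt_of_lt_one (f := fun v => -f (2 - v)) (K := K)
    (by linarith : 2 - b < 2 - u₀) (by linarith)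
    (hf.comp (continuousOn_const.sub continuousOn_id) hreflect).neg
    (fun v hv => neg_pos.2 (hneg _ (hreflect hv)))
    fun v hv => (hle _ (hreflect hv)).trans_eq (by ring)
  refine ⟨fun x => 2 - V x, by simp only [hV0]; ring, fun x hx => ⟨?_, ?_⟩⟩
  · exact ⟨by linarith [(hV x hx).1.2], by linarith [(hV x hx).1.1]⟩
  · simpa using (hV x hx).2.const_sub 2

theorem exists_hasDerivAt_of_mul_sub_one_neg {f : ℝ → ℝ} {a b u₀ K : ℝ} (ha : a < min u₀ 1)
    (hb : max u₀ 1 < b) (hf : ContinuousOn f (Ioo a b))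
    (hsign : ∀ u ∈ Ioo a b, u ≠ 1 → (u - 1) * f u < 0)
    (hle : ∀ u ∈ Ioo a b, |f u| ≤ K * |u - 1|) :
    ∃ U : ℝ → ℝ, U 0 = u₀ ∧ ∀ x ∈ Ici (0 : ℝ), U x ∈ uIcc u₀ 1 ∧ HasDerivAt U (f (U x)) x := by
  obtain ⟨ha₀, ha₁⟩ := lt_min_iff.1 ha
  obtain ⟨hb₀, hb₁⟩ := max_lt_iff.1 hb
  rcases lt_trichotomy u₀ 1 with hu₀ | rfl | hu₀
  · have hIoo : Ioo a 1 ⊆ Ioo a b := Ioo_subset_Ioo_right hb₁.le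
    have hpos : ∀ u ∈ Ioo a 1, 0 < f u := fun u hu =>
      pos_of_mul_neg_right (hsign u (hIoo hu) hu.2.ne) (by linarith [hu.2])
    obtain ⟨U, hU0, hU⟩ := exists_hasDerivAt_of_lt_one (K := K) ha₀ hu₀ (hf.mono hIoo) hpos
      fun u hu => by
        simpa [abs_of_pos (hpos u hu), abs_of_neg (sub_neg.2 hu.2)] using hle u (hIoo hu)
    exact ⟨U, hU0, fun x hx => ⟨Icc_subset_uIcc (Ico_subset_Icc_self (hU x hx).1), (hU x hx).2⟩⟩
  · have hf1 : f 1 = 0 := abs_nonpos_iff.1 (by simpa using hle 1 ⟨ha₁, hb₁⟩)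
    exact ⟨fun _ => 1, rfl, fun x _ => ⟨left_mem_uIcc, hf1 ▸ hasDerivAt_const x 1⟩⟩
  · have hIoo : Ioo 1 b ⊆ Ioo a b := Ioo_subset_Ioo_left ha₁.le
    have hneg : ∀ u ∈ Ioo 1 b, f u < 0 := fun u hu =>
      neg_of_mul_neg_right (hsign u (hIoo hu) hu.1.ne') (by linarith [hu.1])
    obtain ⟨U, hU0, hU⟩ := exists_hasDerivAt_of_one_lt (K := K) hu₀ hb₀ (hf.mono hIoo) hneg
      fun u hu => by
        simpa [abs_of_neg (hneg u hu), abs_of_pos (sub_pos.2 hu.1)] using hle u (hIoo hu)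
    exact ⟨U, hU0, fun x hx => ⟨Icc_subset_uIcc' (Ioc_subset_Icc_self (hU x hx).1), (hU x hx).2⟩⟩

theorem exists_hasDerivAt_of_stable {f : ℝ → ℝ} {a b u₀ κ K : ℝ} (hκ : 0 < κ)
    (ha : a < min u₀ 1) (hb : max u₀ 1 < b) (hf : ContinuousOn f (Ioo a b))
    (hstable : ∀ u ∈ Ioo a b, κ * (u - 1) ^ 2 ≤ -((u - 1) * f u))
    (hle : ∀ u ∈ Ioo a b, |f u| ≤ K * |u - 1|) :
    ∃ U : ℝ → ℝ, U 0 = u₀ ∧ ∀ x ∈ Ici (0 : ℝ),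
      U x ∈ uIcc u₀ 1 ∧ HasDerivAt U (f (U x)) x ∧ |U x - 1| ≤ |u₀ - 1| * exp (-κ * x) := by
  have hsign : ∀ u ∈ Ioo a b, u ≠ 1 → (u - 1) * f u < 0 := fun u hu hu1 => by
    have : 0 < (u - 1) ^ 2 := by positivity [sub_ne_zero.2 hu1]
    nlinarith [hstable u hu]
  obtain ⟨U, hU0, hU⟩ := exists_hasDerivAt_of_mul_sub_one_neg ha hb hf hsign hle
  refine ⟨U, hU0, fun x hx => ⟨(hU x hx).1, (hU x hx).2, ?_⟩⟩
  have hdecay := abs_le_mul_exp_of_mul_deriv_le (y := fun x => U x - 1) (κ := κ)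
    (fun t ht => (hU t ht).2.sub_const 1)
    (fun t ht => by nlinarith [hstable _ (Icc_subset_Ioo ha hb (hU t ht).1)]) hx
  rwa [hU0] at hdecay

theorem two_lt_qex {n : ℕ} (hn : 3 ≤ n) : 2 < qex n := by
  have hn' : (3 : ℝ) ≤ n := by exact_mod_cast hn
  rw [qex, lt_div_iff₀ (by linarith)]
  linarith

noncomputable def templateField (q u : ℝ) : ℝ := √(2 / q) * (u ^ (-q / 2) - u ^ (q / 2))

theorem templateField_one (q : ℝ) : templateField q 1 = 0 := by
  simp [templateField]

theorem contDiffOn_templateField (q : ℝ) {n : WithTop ℕ∞} :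
    ContDiffOn ℝ n (templateField q) (Ioi 0) := fun _ hu =>
  (contDiffAt_const.mul ((contDiffAt_rpow_const_of_ne (ne_of_gt hu)).sub
    (contDiffAt_rpow_const_of_ne (ne_of_gt hu)))).contDiffWithinAt

theorem hasDerivAt_templateField (q : ℝ) {u : ℝ} (hu : 0 < u) :
    HasDerivAt (templateField q)
      (√(2 / q) * (-q / 2 * u ^ (-q / 2 - 1) - q / 2 * u ^ (q / 2 - 1))) u :=
  ((hasDerivAt_rpow_const (Or.inl hu.ne')).sub (hasDerivAt_rpow_const (Or.inl hu.ne'))).const_mul _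

theorem neg_deriv_mul_templateField {q u : ℝ} (hq : 0 < q) (hu : 0 < u) :
    -(deriv (templateField q) u * templateField q u) = u ^ (-q - 1) - u ^ (q - 1) := by
  have hc : √(2 / q) * √(2 / q) = 2 / q := mul_self_sqrt (by positivity)
  have hprod : (u ^ (-q / 2 - 1) + u ^ (q / 2 - 1)) * (u ^ (-q / 2) - u ^ (q / 2))
      = u ^ (-q - 1) - u ^ (q - 1) := by
    simp only [add_mul, mul_sub, ← rpow_add hu]
    ring_nf
  rw [(hasDerivAt_templateField q hu).deriv, templateField]
  calc _ = (√(2 / q) * √(2 / q)) * (q / 2) *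
        ((u ^ (-q / 2 - 1) + u ^ (q / 2 - 1)) * (u ^ (-q / 2) - u ^ (q / 2))) := by ring
    _ = _ := by rw [hc, hprod]; field_simp

theorem sq_sub_one_le_mul_rpow_sub_rpow_neg {p u : ℝ} (hp : 1 ≤ p) (hu : 0 < u) :
    (u - 1) ^ 2 ≤ (u - 1) * (u ^ p - u ^ (-p)) := by
  rcases le_total u 1 with h | h
  · have h1 : u ^ p ≤ u := by simpa using rpow_le_rpow_of_exponent_ge hu h hp
    have h2 : 1 ≤ u ^ (-p) := one_le_rpow_of_pos_of_le_one_of_nonpos hu h (by linarith)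
    nlinarith
  · have h1 : u ≤ u ^ p := by simpa using rpow_le_rpow_of_exponent_le h hp
    have h2 : u ^ (-p) ≤ 1 := rpow_le_one_of_one_le_of_nonpos h (by linarith)
    nlinarith

theorem sqrt_mul_sq_sub_one_le_templateField {q u : ℝ} (hq : 2 ≤ q) (hu : 0 < u) :
    √(2 / q) * (u - 1) ^ 2 ≤ -((u - 1) * templateField q u) := by
  have := sq_sub_one_le_mul_rpow_sub_rpow_neg (p := q / 2) (by linarith) hu
  rw [templateField, neg_div]
  nlinarith [sqrt_nonneg (2 / q)]

/-- Template solution on the half line (Proposition 4.2). -/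
theorem template_solution (n : ℕ) (hn : 3 ≤ n) (u₀ : ℝ) (hu₀ : 0 < u₀) :
    ∃ U : ℝ → ℝ,
      (∀ x ∈ Ici (0 : ℝ), 0 < U x) ∧
      ContDiffOn ℝ 2 U (Ici 0) ∧
      U 0 = u₀ ∧
      (∀ x ∈ Ici (0 : ℝ),
        -(derivWithin (derivWithin U (Ici 0)) (Ici 0) x)
          = U x ^ (-qex n - 1) - U x ^ (qex n - 1)) ∧
      (∀ x ∈ Ici (0 : ℝ),
        derivWithin U (Ici 0) x
          = Real.sqrt (2 / qex n) * (U x ^ (-(qex n) / 2) - U x ^ (qex n / 2))) ∧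
      (∀ r : ℝ, Tendsto (fun x : ℝ => x ^ r * |U x - 1|) atTop (nhds 0)) ∧
      (∀ r : ℝ, Tendsto (fun x : ℝ => x ^ r * |derivWithin U (Ici 0) x|) atTop (nhds 0)) := by
  set f := templateField (qex n)
  have hq : 2 < qex n := two_lt_qex hn
  have hc : 0 < √(2 / qex n) := sqrt_pos.2 (by positivity)
  have hm : 0 < min u₀ 1 := lt_min hu₀ one_pos
  have hab : Icc (min u₀ 1 / 2) (max u₀ 1 + 1) ⊆ Ioi 0 := fun u hu => (half_pos hm).trans_le hu.1
  have hsub : uIcc u₀ 1 ⊆ Icc (min u₀ 1 / 2) (max u₀ 1 + 1) :=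
    Icc_subset_Icc (half_le_self hm.le) (le_add_of_nonneg_right zero_le_one)
  obtain ⟨K, hK⟩ := exists_abs_le_mul_abs_sub_of_contDiffOn
    ((contDiffOn_templateField (qex n)).mono hab) (hsub right_mem_uIcc) (templateField_one _)
  obtain ⟨U, hU0, hU⟩ := exists_hasDerivAt_of_stable (u₀ := u₀) hc (half_lt_self hm) (lt_add_one _)
    ((contDiffOn_templateField (qex n) (n := 0)).continuousOn.mono (Ioo_subset_Icc_self.trans hab))
    (fun u hu => sqrt_mul_sq_sub_one_le_templateField hq.le (hab (Ioo_subset_Icc_self hu)))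
    fun u hu => hK u (Ioo_subset_Icc_self hu)
  have hUpos : ∀ x ∈ Ici (0 : ℝ), 0 < U x := fun x hx => hab (hsub (hU x hx).1)
  have hU' : ∀ x ∈ Ici (0 : ℝ), HasDerivWithinAt U (f (U x)) (Ici 0) x := fun x hx =>
    (hU x hx).2.1.hasDerivWithinAt
  have hderiv : ∀ x ∈ Ici (0 : ℝ), derivWithin U (Ici 0) x = f (U x) := fun x hx =>
    (hU' x hx).derivWithin (uniqueDiffOn_Ici 0 x hx)
  refine ⟨U, hUpos, ?_, hU0, fun x hx => ?_, hderiv, fun r => ?_, fun r => ?_⟩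
  · exact contDiffOn_succ_of_hasDerivWithinAt_comp (n := 1) (uniqueDiffOn_Ici 0) hUpos hU'
      (contDiffOn_templateField _)
  · rw [derivWithin_derivWithin_of_hasDerivWithinAt_comp (uniqueDiffOn_Ici 0) hU' hx
      (hasDerivAt_templateField _ (hUpos x hx)).differentiableAt,
      neg_deriv_mul_templateField (by linarith) (hUpos x hx)]
  · exact tendsto_rpow_mul_abs_of_abs_le_mul_exp hc (fun x hx => (hU x hx).2.2) r
  · refine tendsto_rpow_mul_abs_of_abs_le_mul_exp hc (B := K * |u₀ - 1|) (fun x hx => ?_) r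
    rw [hderiv x hx, mul_assoc]
    exact (hK _ (hsub (hU x hx).1)).trans (by gcongr; exact (hU x hx).2.2)
end
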